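/- Let H be any of the nonstandard face subgroups G^{36}_N, A^3G^3_N, A^3G^6_N. Then for every k ∈ α_{45}, pr^G_k(H) = s^{k−n}_k(A_{k−n}), and for every k ∈ {1,…,|α_3|}, pr^G_k(H) = s^{k+|α_{12}|}_k(A_{k+|α_{12}|}). Moreover, for H = A^{33}_N: pr^G_k(H) is the trivial subgroup for every k ∈ α_{45}, and pr^G_k(H) = s^{k+|α_{12}|}_k(A_{k+|α_{12}|}) for every k ∈ {1,…,|α_3|}. -/

import Mathlib

namespace SB

/-- `cc n p` is the 0-based boundary of the `p`-th label sequence: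
`cc n p = ⌈p·n/3⌉` for `p ≤ 3`, and `cc n p = n + ⌈(p-3)·n/3⌉` for `p ≥ 3`. -/
def cc (n p : ℕ) : ℕ := if p < 3 then (p * n + 2) / 3 else n + ((p - 3) * n + 2) / 3

/-- The 0-based label sequence `α_{p+1}` (paper's `α_1,…,α_6` for `p = 0,…,5`)
as a finite set of coordinates in `Fin (2n)`. -/
def alphaF (n p : ℕ) : Finset (Fin (2 * n)) :=
  Finset.univ.filter (fun x => cc n p ≤ x.val ∧ x.val < cc n (p + 1))

/-- The 0-based label sequence `α_{t+1}` (for `t < 3`) as a finite set of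
indices in `Fin n` (indexing the factors `A_j`). -/
def alphaN (n t : ℕ) : Finset (Fin n) :=
  Finset.univ.filter (fun x => cc n t ≤ x.val ∧ x.val < cc n (t + 1))

/-- Reduction of a natural number modulo `2n`, as an element of `Fin (2n)`. -/
def idx {n : ℕ} (hn : 0 < n) (k : ℕ) : Fin (2 * n) := ⟨k % (2 * n), Nat.mod_lt _ (by omega)⟩

/-- Reduction of a natural number modulo `n`, as an element of `Fin n`
(this implements the paper's `j*`). -/
def idxN {n : ℕ} (hn : 0 < n) (k : ℕ) : Fin n := ⟨k % n, Nat.mod_lt _ hn⟩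

/-- The set `Ȳ_i` of vectorized kernel generators: `y ∈ Y i` placed in
coordinate `i` with identity elsewhere. -/
def Ybar {n : ℕ} {G : Fin (2 * n) → Type} [∀ i, Group (G i)]
    (Y : ∀ i, Set (G i)) (i : Fin (2 * n)) : Set (∀ i', G i') :=
  Pi.mulSingle i '' (Y i)

/-- The set `Z̄^j_{i,k}` of vectorized section generators: for `b ∈ A j`, the
element with `s j i b` in coordinate `i`, `s j k b⁻¹` in coordinate `k`, and
identity elsewhere. -/
def Zbar {n : ℕ} {A : Fin n → Type} [∀ j, CommGroup (A j)]
    {G : Fin (2 * n) → Type} [∀ i, Group (G i)]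
    (s : ∀ (j : Fin n) (i : Fin (2 * n)), A j →* G i)
    (j : Fin n) (i k : Fin (2 * n)) : Set (∀ i', G i') :=
  Set.range (fun b : A j => Pi.mulSingle i (s j i b) * Pi.mulSingle k (s j k b⁻¹))

section Group3

variable {n : ℕ} {A : Fin n → Type} [∀ j, CommGroup (A j)]
  {G : Fin (2 * n) → Type} [∀ i, Group (G i)]

/-- The nonstandard face subgroup `G^{36}_N`. -/
def G36N (hn : 0 < n) (s : ∀ (j : Fin n) (i : Fin (2 * n)), A j →* G i)
    (Y : ∀ i, Set (G i)) : Subgroup (∀ i', G i') :=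
  Subgroup.closure (⋃ i ∈ (alphaF n 2 ∪ alphaF n 5),
    (Ybar Y i
      ∪ (⋃ j ∈ alphaF n 3 ∪ alphaF n 4, Zbar s (idxN hn j.val) i j)
      ∪ ⋃ j ∈ alphaF n 2, Zbar s (idxN hn j.val) i (idx hn (j.val - cc n 2))))

/-- The nonstandard face subgroup `A^3G^3_N`. -/
def A3G3N (hn : 0 < n) (s : ∀ (j : Fin n) (i : Fin (2 * n)), A j →* G i)
    (Y : ∀ i, Set (G i)) : Subgroup (∀ i', G i') :=
  Subgroup.closure (⋃ i ∈ alphaF n 2,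
    (Ybar Y i
      ∪ (⋃ j ∈ alphaF n 3 ∪ alphaF n 4 ∪ alphaF n 5, Zbar s (idxN hn j.val) i j)
      ∪ ⋃ j ∈ alphaF n 2, Zbar s (idxN hn j.val) i (idx hn (j.val - cc n 2))))

/-- The nonstandard face subgroup `A^3G^6_N`. -/
def A3G6N (hn : 0 < n) (s : ∀ (j : Fin n) (i : Fin (2 * n)), A j →* G i)
    (Y : ∀ i, Set (G i)) : Subgroup (∀ i', G i') :=
  Subgroup.closure (⋃ i ∈ alphaF n 5,
    (Ybar Y i
      ∪ (⋃ j ∈ alphaF n 3 ∪ alphaF n 4 ∪ alphaF n 5, Zbar s (idxN hn j.val) i j)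
      ∪ ⋃ j ∈ alphaF n 2, Zbar s (idxN hn j.val) i (idx hn (j.val - cc n 2))))

/-- The nonstandard linear-algebra face subgroup `A^{33}_N`. -/
def A33N (hn : 0 < n) (s : ∀ (j : Fin n) (i : Fin (2 * n)), A j →* G i) :
    Subgroup (∀ i', G i') :=
  Subgroup.closure (⋃ j ∈ alphaN n 2,
    (Zbar s j (idx hn j.val) (idx hn (j.val + n))
      ∪ Zbar s j (idx hn j.val) (idx hn (j.val - cc n 2))))

end Group3

/-!
Projection to a coordinate `k` commutes with taking generated subgroups, so `pr_k(H)` is generated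
by the `k`-th coordinates of the generators of `H`. Every generator is supported on one coordinate
of `α_{36}` (of `α_3` for `A^{33}_N`), which is never `k`, and on at most one further coordinate.
Hence its `k`-th coordinate is trivial unless that further coordinate is `k`, and the generators
for which it is `k` (there are none for `A^{33}_N` and `k ∈ α_{45}`) run through the whole image
of a single section `s^{j*}_k`.
-/

lemma map_closure_eq_of_mapsTo_of_surjOn {M N : Type*} [Group M] [Group N] {f : M →* N}
    {S : Set M} {K : Subgroup N} (hmaps : Set.MapsTo f S K) (hsurj : Set.SurjOn f S K) :
    (Subgroup.closure S).map f = K := by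
  rw [MonoidHom.map_closure]
  exact le_antisymm ((Subgroup.closure_le K).2 hmaps.image_subset)
    (hsurj.trans Subgroup.subset_closure)

lemma cc_two (n : ℕ) : cc n 2 = (2 * n + 2) / 3 := rfl

lemma mem_alphaF_two {n : ℕ} {x : Fin (2 * n)} :
    x ∈ alphaF n 2 ↔ cc n 2 ≤ x.val ∧ x.val < n := by
  simp [alphaF, cc]

lemma mem_alphaF_five {n : ℕ} {x : Fin (2 * n)} :
    x ∈ alphaF n 5 ↔ n + cc n 2 ≤ x.val := by
  simp [alphaF, cc]; omega

lemma mem_alphaF_three_union_four {n : ℕ} {x : Fin (2 * n)} :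
    x ∈ alphaF n 3 ∪ alphaF n 4 ↔ n ≤ x.val ∧ x.val < n + cc n 2 := by
  simp [alphaF, cc]; omega

lemma mem_alphaF_three_union_four_union_five {n : ℕ} {x : Fin (2 * n)} :
    x ∈ alphaF n 3 ∪ alphaF n 4 ∪ alphaF n 5 ↔ n ≤ x.val := by
  simp [alphaF, cc]; omega

lemma mem_alphaN_two {n : ℕ} {x : Fin n} :
    x ∈ alphaN n 2 ↔ cc n 2 ≤ x.val := by
  simp [alphaN, cc]

lemma alphaF_two_nonempty {n : ℕ} (hn : 3 ≤ n) : (alphaF n 2).Nonempty := by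
  have hc : cc n 2 < n := by rw [cc_two]; omega
  exact ⟨⟨cc n 2, by omega⟩, mem_alphaF_two.2 ⟨le_rfl, hc⟩⟩

lemma alphaF_five_nonempty {n : ℕ} (hn : 3 ≤ n) : (alphaF n 5).Nonempty :=
  ⟨⟨n + cc n 2, by rw [cc_two]; omega⟩, mem_alphaF_five.2 le_rfl⟩

lemma idx_val {n : ℕ} (hn : 0 < n) (k : Fin (2 * n)) : idx hn k.val = k :=
  Fin.ext (Nat.mod_eq_of_lt k.2)

lemma val_idx_of_lt {n : ℕ} (hn : 0 < n) {m : ℕ} (h : m < 2 * n) : (idx hn m).val = m :=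
  Nat.mod_eq_of_lt h

lemma ne_idx_of_val_ne {n : ℕ} (hn : 0 < n) {m : ℕ} (hm : m < 2 * n) {k : Fin (2 * n)}
    (h : k.val ≠ m) : k ≠ idx hn m :=
  Fin.ne_of_val_ne (by rwa [val_idx_of_lt hn hm])

lemma val_idxN_of_lt {n : ℕ} (hn : 0 < n) {m : ℕ} (h : m < n) : (idxN hn m).val = m :=
  Nat.mod_eq_of_lt h

section Generators

variable {n : ℕ} {A : Fin n → Type} [∀ j, CommGroup (A j)]
  {G : Fin (2 * n) → Type} [∀ i, Group (G i)]

lemma Ybar_apply_of_ne {Y : ∀ i, Set (G i)} {i k : Fin (2 * n)} (hki : k ≠ i)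
    {g : ∀ i, G i} (hg : g ∈ Ybar Y i) : g k = 1 := by
  obtain ⟨y, -, rfl⟩ := hg
  exact Pi.mulSingle_eq_of_ne hki y

variable (s : ∀ (j : Fin n) (i : Fin (2 * n)), A j →* G i)

lemma Zbar_apply_of_ne {j : Fin n} {i k' k : Fin (2 * n)} (hki : k ≠ i) (hkk' : k ≠ k')
    {g : ∀ i, G i} (hg : g ∈ Zbar s j i k') : g k = 1 := by
  obtain ⟨b, rfl⟩ := hg
  simp [Pi.mulSingle_eq_of_ne hki, Pi.mulSingle_eq_of_ne hkk']

lemma Zbar_apply_mem_range {j : Fin n} {i k : Fin (2 * n)} (hki : k ≠ i)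
    {g : ∀ i, G i} (hg : g ∈ Zbar s j i k) : g k ∈ (s j k).range := by
  obtain ⟨b, rfl⟩ := hg
  exact ⟨b⁻¹, by simp [Pi.mulSingle_eq_of_ne hki]⟩

lemma exists_mem_Zbar_apply_eq {j : Fin n} {i k : Fin (2 * n)} (hki : k ≠ i) (a : A j) :
    ∃ g ∈ Zbar s j i k, g k = s j k a :=
  ⟨_, ⟨a⁻¹, rfl⟩, by simp [Pi.mulSingle_eq_of_ne hki]⟩

/-- The generating set shared by `G^{36}_N`, `A^3G^3_N` and `A^3G^6_N`: `I` is the block of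
coordinates carrying the `Ȳ_i`, and `J` the coordinates `j` of the generators `Z̄^{j*}_{i,j}`. -/
def faceGenerators (hn : 0 < n) (Y : ∀ i, Set (G i)) (I J : Finset (Fin (2 * n))) :
    Set (∀ i, G i) :=
  ⋃ i ∈ I, (Ybar Y i
    ∪ (⋃ j ∈ J, Zbar s (idxN hn j.val) i j)
    ∪ ⋃ j ∈ alphaF n 2, Zbar s (idxN hn j.val) i (idx hn (j.val - cc n 2)))

variable {s} {hn : 0 < n} {Y : ∀ i, Set (G i)} {I J : Finset (Fin (2 * n))} {k : Fin (2 * n)}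

lemma map_eval_closure_faceGenerators_of_mem (hkI : k ∉ I) (hkJ : k ∈ J) (hk : n ≤ k.val)
    (hI : I.Nonempty) :
    (Subgroup.closure (faceGenerators s hn Y I J)).map (Pi.evalMonoidHom G k)
      = (s (idxN hn k.val) k).range := by
  apply map_closure_eq_of_mapsTo_of_surjOn
  · intro g hg
    obtain ⟨i, hi, hg⟩ := Set.mem_iUnion₂.1 hg
    have hki : k ≠ i := (ne_of_mem_of_not_mem hi hkI).symm
    show g k ∈ _
    rcases hg with (hg | hg) | hg
    · exact Ybar_apply_of_ne hki hg ▸ one_mem _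
    · obtain ⟨j, -, hg⟩ := Set.mem_iUnion₂.1 hg
      by_cases hkj : k = j
      · subst hkj
        exact Zbar_apply_mem_range s hki hg
      · exact Zbar_apply_of_ne s hki hkj hg ▸ one_mem _
    · obtain ⟨j, hj, hg⟩ := Set.mem_iUnion₂.1 hg
      rw [mem_alphaF_two] at hj
      have hkj : k ≠ idx hn (j.val - cc n 2) :=
        ne_idx_of_val_ne hn (by omega) (by omega)
      exact Zbar_apply_of_ne s hki hkj hg ▸ one_mem _
  · rintro _ ⟨a, rfl⟩
    obtain ⟨i, hi⟩ := hI
    obtain ⟨g, hg, hgk⟩ := exists_mem_Zbar_apply_eq s (ne_of_mem_of_not_mem hi hkI).symm a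
    exact ⟨g, Set.mem_iUnion₂.2 ⟨i, hi, Or.inl (Or.inr (Set.mem_iUnion₂.2 ⟨k, hkJ, hg⟩))⟩, hgk⟩

lemma map_eval_closure_faceGenerators_of_lt (hkI : k ∉ I) (hkJ : k ∉ J)
    (hk : k.val + cc n 2 < n) (hI : I.Nonempty) :
    (Subgroup.closure (faceGenerators s hn Y I J)).map (Pi.evalMonoidHom G k)
      = (s (idxN hn (k.val + cc n 2)) k).range := by
  apply map_closure_eq_of_mapsTo_of_surjOn
  · intro g hg
    obtain ⟨i, hi, hg⟩ := Set.mem_iUnion₂.1 hg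
    have hki : k ≠ i := (ne_of_mem_of_not_mem hi hkI).symm
    show g k ∈ _
    rcases hg with (hg | hg) | hg
    · exact Ybar_apply_of_ne hki hg ▸ one_mem _
    · obtain ⟨j, hj, hg⟩ := Set.mem_iUnion₂.1 hg
      exact Zbar_apply_of_ne s hki (ne_of_mem_of_not_mem hj hkJ).symm hg ▸ one_mem _
    · obtain ⟨j, hj, hg⟩ := Set.mem_iUnion₂.1 hg
      rw [mem_alphaF_two] at hj
      by_cases hjk : j.val = k.val + cc n 2
      · rw [hjk, Nat.add_sub_cancel, idx_val] at hg
        exact Zbar_apply_mem_range s hki hg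
      · have hkj : k ≠ idx hn (j.val - cc n 2) :=
          ne_idx_of_val_ne hn (by omega) (by omega)
        exact Zbar_apply_of_ne s hki hkj hg ▸ one_mem _
  · rintro _ ⟨a, rfl⟩
    obtain ⟨i, hi⟩ := hI
    obtain ⟨g, hg, hgk⟩ := exists_mem_Zbar_apply_eq s (ne_of_mem_of_not_mem hi hkI).symm a
    have hj : (⟨k.val + cc n 2, by omega⟩ : Fin (2 * n)) ∈ alphaF n 2 :=
      mem_alphaF_two.2 ⟨Nat.le_add_left _ _, hk⟩
    refine ⟨g, Set.mem_iUnion₂.2 ⟨i, hi, Or.inr (Set.mem_iUnion₂.2 ⟨_, hj, ?_⟩)⟩, hgk⟩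
    rwa [Nat.add_sub_cancel, idx_val]

lemma map_eval_closure_A33N_of_mem (hk : k ∈ alphaF n 3 ∪ alphaF n 4) :
    (A33N hn s).map (Pi.evalMonoidHom G k) = ⊥ := by
  rw [mem_alphaF_three_union_four] at hk
  refine (Subgroup.map_eq_bot_iff _).2 ((Subgroup.closure_le _).2 fun g hg ↦ ?_)
  obtain ⟨j, hj, hg⟩ := Set.mem_iUnion₂.1 hg
  have hkj : k ≠ idx hn j.val := ne_idx_of_val_ne hn (by omega) (by omega)
  rw [mem_alphaN_two] at hj
  show g k = 1
  rcases hg with hg | hg <;>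
    exact Zbar_apply_of_ne s hkj (ne_idx_of_val_ne hn (by omega) (by omega)) hg

lemma map_eval_closure_A33N_of_lt (hk : k.val < n - cc n 2) :
    (A33N hn s).map (Pi.evalMonoidHom G k) = (s (idxN hn (k.val + cc n 2)) k).range := by
  have hc := cc_two n
  apply map_closure_eq_of_mapsTo_of_surjOn
  · intro g hg
    obtain ⟨j, hj, hg⟩ := Set.mem_iUnion₂.1 hg
    rw [mem_alphaN_two] at hj
    have hkj : k ≠ idx hn j.val := ne_idx_of_val_ne hn (by omega) (by omega)
    show g k ∈ _
    rcases hg with hg | hg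
    · exact Zbar_apply_of_ne s hkj
        (ne_idx_of_val_ne hn (by omega) (by omega)) hg ▸ one_mem _
    · by_cases hjk : j = idxN hn (k.val + cc n 2)
      · subst hjk
        rw [val_idxN_of_lt hn (by omega)] at hg hkj
        rw [Nat.add_sub_cancel, idx_val] at hg
        exact Zbar_apply_mem_range s hkj hg
      · have hjk' := Fin.val_ne_of_ne hjk
        rw [val_idxN_of_lt hn (by omega)] at hjk'
        exact Zbar_apply_of_ne s hkj
          (ne_idx_of_val_ne hn (by omega) (by omega)) hg ▸ one_mem _
  · rintro _ ⟨a, rfl⟩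
    have hj : idxN hn (k.val + cc n 2) ∈ alphaN n 2 := by
      rw [mem_alphaN_two, val_idxN_of_lt hn (by omega)]; omega
    have hkj : k ≠ idx hn (k.val + cc n 2) :=
      ne_idx_of_val_ne hn (by omega) (by omega)
    obtain ⟨g, hg, hgk⟩ := exists_mem_Zbar_apply_eq s hkj a
    refine ⟨g, Set.mem_iUnion₂.2 ⟨_, hj, Or.inr ?_⟩, hgk⟩
    rwa [val_idxN_of_lt hn (by omega), Nat.add_sub_cancel, idx_val]

lemma map_eval_closure_faceGenerators (hI : I ⊆ alphaF n 2 ∪ alphaF n 5) (hIne : I.Nonempty)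
    (hJ : alphaF n 3 ∪ alphaF n 4 ⊆ J) (hJ' : J ⊆ alphaF n 3 ∪ alphaF n 4 ∪ alphaF n 5) :
    (∀ k ∈ alphaF n 3 ∪ alphaF n 4,
      (Subgroup.closure (faceGenerators s hn Y I J)).map (Pi.evalMonoidHom G k)
        = (s (idxN hn k.val) k).range) ∧
    (∀ k : Fin (2 * n), k.val < n - cc n 2 →
      (Subgroup.closure (faceGenerators s hn Y I J)).map (Pi.evalMonoidHom G k)
        = (s (idxN hn (k.val + cc n 2)) k).range) := by
  have hc := cc_two n
  have hIval : ∀ i ∈ I, cc n 2 ≤ i.val ∧ (i.val < n ∨ n + cc n 2 ≤ i.val) := fun i hi ↦ by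
    have := hI hi
    simp only [Finset.mem_union, mem_alphaF_two, mem_alphaF_five] at this
    omega
  refine ⟨fun k hk ↦ ?_, fun k hk ↦ ?_⟩
  · have hk' := mem_alphaF_three_union_four.1 hk
    exact map_eval_closure_faceGenerators_of_mem
      (fun hkI ↦ by have := hIval k hkI; omega) (hJ hk) hk'.1 hIne
  · exact map_eval_closure_faceGenerators_of_lt (fun hkI ↦ by have := hIval k hkI; omega)
      (fun hkJ ↦ by have := mem_alphaF_three_union_four_union_five.1 (hJ' hkJ); omega)
      (by omega) hIne

end Generators

theorem stmt_13
    (n : ℕ) (hn : 3 ≤ n)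
    (A : Fin n → Type) [∀ j, CommGroup (A j)]
    (G : Fin (2 * n) → Type) [∀ i, Group (G i)]
    (s : ∀ (j : Fin n) (i : Fin (2 * n)), A j →* G i)
    (Y : ∀ i, Set (G i))
    :
    (∀ H ∈ ({G36N (by omega : 0 < n) s Y, A3G3N (by omega : 0 < n) s Y,
              A3G6N (by omega : 0 < n) s Y} : Set (Subgroup (∀ i, G i))),
        (∀ k ∈ alphaF n 3 ∪ alphaF n 4,
          Subgroup.map (Pi.evalMonoidHom G k) H
            = MonoidHom.range (s (idxN (by omega : 0 < n) k.val) k)) ∧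
        (∀ k : Fin (2 * n), k.val < n - cc n 2 →
          Subgroup.map (Pi.evalMonoidHom G k) H
            = MonoidHom.range (s (idxN (by omega : 0 < n) (k.val + cc n 2)) k)))
      ∧ (∀ k ∈ alphaF n 3 ∪ alphaF n 4,
          Subgroup.map (Pi.evalMonoidHom G k) (A33N (by omega : 0 < n) s) = ⊥)
      ∧ (∀ k : Fin (2 * n), k.val < n - cc n 2 →
          Subgroup.map (Pi.evalMonoidHom G k) (A33N (by omega : 0 < n) s)
            = MonoidHom.range (s (idxN (by omega : 0 < n) (k.val + cc n 2)) k)) := by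
  refine ⟨?_, fun k ↦ map_eval_closure_A33N_of_mem, fun k ↦ map_eval_closure_A33N_of_lt⟩
  rintro H (rfl | rfl | rfl)
  · exact map_eval_closure_faceGenerators (I := alphaF n 2 ∪ alphaF n 5)
      (J := alphaF n 3 ∪ alphaF n 4) le_rfl
      ((alphaF_two_nonempty hn).mono Finset.subset_union_left) le_rfl Finset.subset_union_left
  · exact map_eval_closure_faceGenerators (I := alphaF n 2)
      (J := alphaF n 3 ∪ alphaF n 4 ∪ alphaF n 5) Finset.subset_union_left
      (alphaF_two_nonempty hn) Finset.subset_union_left le_rfl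
  · exact map_eval_closure_faceGenerators (I := alphaF n 5)
      (J := alphaF n 3 ∪ alphaF n 4 ∪ alphaF n 5) Finset.subset_union_right
      (alphaF_five_nonempty hn) Finset.subset_union_left le_rfl

end SB
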